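/- arXiv:2112.15179 — 3 statements merged into one kernel-verified Lean document; each statement's English description precedes it below -/
import Mathlib

section
/- Let N be an internally labelled phylogenetic network. Then N = F(U(N)), i.e. N is recovered from its unfolding U(N) by the folding operation F. -/
/-- The data of a rooted binary internally multi-labelled phylogenetic network (IMLN):
a finite directed graph (no parallel arcs, since `Arc` is a relation) with a
distinguished root, leaf labels in `X` and reticulation/elementary labels in `Λ`. -/
structure IMLN (X : Type) (Λ : Type) : Type 1 where
  V : Type
  fintypeV : Fintype V
  Arc : V → V → Prop
  root : V
  leafLabel : V → X
  retLabel : V → Λ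

namespace IMLN

variable {X Λ : Type}

/-- In-degree of a node. -/
noncomputable def inDeg (N : IMLN X Λ) (v : N.V) : ℕ := {u : N.V | N.Arc u v}.ncard

/-- Out-degree of a node. -/
noncomputable def outDeg (N : IMLN X Λ) (v : N.V) : ℕ := {w : N.V | N.Arc v w}.ncard

/-- A leaf: a node of out-degree zero. -/
def IsLeaf (N : IMLN X Λ) (v : N.V) : Prop := N.outDeg v = 0

/-- A reticulation node: in-degree two and out-degree one. -/
def IsRet (N : IMLN X Λ) (v : N.V) : Prop := N.inDeg v = 2 ∧ N.outDeg v = 1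

/-- An elementary node: in-degree at most one and out-degree one. -/
def IsElem (N : IMLN X Λ) (v : N.V) : Prop := N.inDeg v ≤ 1 ∧ N.outDeg v = 1

/-- A tree node: a leaf, or a node of out-degree two (in particular not of out-degree one). -/
def IsTreeNode (N : IMLN X Λ) (v : N.V) : Prop := N.outDeg v ≠ 1

/-- An internal node: a non-leaf. -/
def IsInternal (N : IMLN X Λ) (v : N.V) : Prop := ¬ N.IsLeaf v

/-- Reachability by a (possibly trivial) directed path. -/
def Reaches (N : IMLN X Λ) (u v : N.V) : Prop := Relation.ReflTransGen N.Arc u v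

/-- Well-formedness: `N` is a rooted binary internally multi-labelled phylogenetic network. -/
structure IsIMLN (N : IMLN X Λ) : Prop where
  acyclic : ∀ v : N.V, ¬ Relation.TransGen N.Arc v v
  rootIn : N.inDeg N.root = 0
  rootOut : N.outDeg N.root = 1 ∨ N.outDeg N.root = 2
  uniqueRoot : ∀ v : N.V, N.inDeg v = 0 → v = N.root
  connected : ∀ v : N.V, N.Reaches N.root v
  degrees : ∀ v : N.V, v ≠ N.root →
      (N.inDeg v = 1 ∧ (N.outDeg v = 0 ∨ N.outDeg v = 1 ∨ N.outDeg v = 2)) ∨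
      (N.inDeg v = 2 ∧ N.outDeg v = 1)
  leafSurj : ∀ x : X, ∃ v : N.V, N.IsLeaf v ∧ N.leafLabel v = x
  retInj : ∀ u v : N.V, N.IsRet u → N.IsRet v → N.retLabel u = N.retLabel v → u = v
  retElemLabels : ∀ u v : N.V, N.IsRet u → N.IsElem v → N.retLabel u ≠ N.retLabel v

/-- An internally labelled phylogenetic network: an IMLN with no elementary nodes
whose leaf labelling and reticulation labelling are bijections. -/
def IsILPN (N : IMLN X Λ) : Prop :=
  N.IsIMLN ∧ (∀ v : N.V, ¬ N.IsElem v) ∧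
    (∀ x : X, ∃! v : N.V, N.IsLeaf v ∧ N.leafLabel v = x) ∧
    (∀ l : Λ, ∃! v : N.V, N.IsRet v ∧ N.retLabel v = l)

/-- `u ∈ R_min(N)`: a reticulation node with no reticulation node strictly below it. -/
def IsMinRet (N : IMLN X Λ) (u : N.V) : Prop :=
  N.IsRet u ∧ ∀ w : N.V, N.IsRet w → N.Reaches u w → w = u

/-- The sub-IMLN `N(u)` rooted at `u`. -/
noncomputable def sub (N : IMLN X Λ) (u : N.V) : IMLN X Λ where
  V := {v : N.V // N.Reaches u v}
  fintypeV := @Subtype.fintype _ _ (Classical.decPred _) N.fintypeV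
  Arc a b := N.Arc a.1 b.1
  root := ⟨u, Relation.ReflTransGen.refl⟩
  leafLabel a := N.leafLabel a.1
  retLabel a := N.retLabel a.1

/-- Isomorphism of IMLNs up to a permutation of the leaf labels and of the
internal labels: an arc-preserving bijection relating the labels via `σX`, `σΛ`. -/
def IsomUpTo (σX : Equiv.Perm X) (σΛ : Equiv.Perm Λ) (N₁ N₂ : IMLN X Λ) : Prop :=
  ∃ f : N₁.V ≃ N₂.V,
    (∀ u v : N₁.V, N₁.Arc u v ↔ N₂.Arc (f u) (f v)) ∧
    (∀ v : N₁.V, N₁.IsLeaf v → N₁.leafLabel v = σX (N₂.leafLabel (f v))) ∧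
    (∀ v : N₁.V, N₁.IsRet v ∨ N₁.IsElem v → N₁.retLabel v = σΛ (N₂.retLabel (f v)))

/-- Isomorphism of IMLNs: an arc-preserving bijection preserving leaf labels and
the labels of reticulation and elementary nodes. -/
def Isom (N₁ N₂ : IMLN X Λ) : Prop := IsomUpTo (Equiv.refl X) (Equiv.refl Λ) N₁ N₂

/-- `N'` is the unfolded IMLN `U(N,u)` of `N` at `u`: the arcs from the two parents
`v₁, v₂` of `u` to `u` are deleted, the subnetwork rooted at `u` is duplicated with
all its labels (`g` embeds `N` itself, `g'` embeds the new copy of the subnetwork),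
and arcs from `v₁` to one copy of `u` and from `v₂` to the other copy are added. -/
def IsUnfoldAt (N N' : IMLN X Λ) (u : N.V) : Prop :=
  ∃ g g' : N.V → N'.V,
    Function.Injective g ∧
    (∀ a b : N.V, N.Reaches u a → N.Reaches u b → g' a = g' b → a = b) ∧
    (∀ a b : N.V, N.Reaches u b → g a ≠ g' b) ∧
    (∀ x : N'.V, (∃ a, x = g a) ∨ (∃ a, N.Reaches u a ∧ x = g' a)) ∧
    g N.root = N'.root ∧
    (∀ a : N.V, N'.leafLabel (g a) = N.leafLabel a) ∧
    (∀ a : N.V, N'.retLabel (g a) = N.retLabel a) ∧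
    (∀ a : N.V, N.Reaches u a → N'.leafLabel (g' a) = N.leafLabel a) ∧
    (∀ a : N.V, N.Reaches u a → N'.retLabel (g' a) = N.retLabel a) ∧
    ∃ v₁ v₂ : N.V, v₁ ≠ v₂ ∧ N.Arc v₁ u ∧ N.Arc v₂ u ∧
      ∀ x y : N'.V, N'.Arc x y ↔
        ((∃ a b : N.V, N.Arc a b ∧ b ≠ u ∧ x = g a ∧ y = g b) ∨
         (∃ a b : N.V, N.Reaches u a ∧ N.Reaches u b ∧ N.Arc a b ∧ x = g' a ∧ y = g' b) ∨
         (x = g v₁ ∧ y = g u) ∨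
         (x = g v₂ ∧ y = g' u))

/-- One unfolding step, performed at the (necessarily unique) reticulation node
of `N` labelled `l`, which is required to lie in `R_min(N)`. -/
def UnfoldStep (N N' : IMLN X Λ) (l : Λ) : Prop :=
  ∃ u : N.V, N.IsMinRet u ∧ N.retLabel u = l ∧ IsUnfoldAt N N' u

/-- `IsUnfoldSeq N ls M`: `M` is obtained from `N` by the sequence of unfoldings at
the reticulation nodes labelled by the list `ls` (each minimal at its turn);
this encodes the notion of a compatible sequence and its associated sequence of IMLNs. -/
inductive IsUnfoldSeq : IMLN X Λ → List Λ → IMLN X Λ → Prop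
  | nil (N : IMLN X Λ) : IsUnfoldSeq N [] N
  | cons {N M M' : IMLN X Λ} {l : Λ} {ls : List Λ} :
      UnfoldStep N M l → IsUnfoldSeq M ls M' → IsUnfoldSeq N (l :: ls) M'

/-- A list of reticulation nodes of `N` is a compatible sequence if the associated
sequence of unfoldings exists. -/
def Compatible (N : IMLN X Λ) (us : List N.V) : Prop :=
  (∀ u ∈ us, N.IsRet u) ∧ ∃ M : IMLN X Λ, IsUnfoldSeq N (us.map N.retLabel) M

/-- The order `≤_E` on elementary nodes: `a ≤_E b` iff there are elementary nodes
`a', b'` with the same labels as `a, b` and a directed path from `b` to `a`. -/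
def LE_E (N : IMLN X Λ) (a b : N.V) : Prop :=
  N.IsElem a ∧ N.IsElem b ∧
    ∃ a' b' : N.V, N.IsElem a' ∧ N.IsElem b' ∧
      N.retLabel a' = N.retLabel a ∧ N.retLabel b' = N.retLabel b ∧ N.Reaches b a

/-- `a ∈ E_max(N)`: a maximal elementary node under `≤_E`. -/
def IsEMax (N : IMLN X Λ) (a : N.V) : Prop :=
  N.IsElem a ∧ ∀ b : N.V, N.LE_E a b → b = a

/-- `N'` is the folded IMLN `F(N,u)` of `N` at `u ∈ E_max(N)`: choosing the other
node `v ∈ E_max(N)` with the same label and isomorphic rooted subnetwork, the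
subnetwork rooted at `v` and the arc from the parent `vp` of `v` to `v` are deleted
and the arc `(vp, u)` is added. -/
def IsFoldAt (N N' : IMLN X Λ) (u : N.V) : Prop :=
  N.IsEMax u ∧
  ∃ v : N.V, v ≠ u ∧ N.IsEMax v ∧ N.retLabel v = N.retLabel u ∧
    Isom (N.sub u) (N.sub v) ∧
    ∃ vp : N.V, N.Arc vp v ∧
      ∃ h : N'.V → N.V,
        Function.Injective h ∧
        (∀ x : N'.V, ¬ N.Reaches v (h x)) ∧
        (∀ a : N.V, ¬ N.Reaches v a → ∃ x, h x = a) ∧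
        h N'.root = N.root ∧
        (∀ x : N'.V, N'.leafLabel x = N.leafLabel (h x)) ∧
        (∀ x : N'.V, N'.retLabel x = N.retLabel (h x)) ∧
        (∀ x y : N'.V, N'.Arc x y ↔ (N.Arc (h x) (h y) ∨ (h x = vp ∧ h y = u)))

/-- `IsFoldSeq N ls M`: `M` is obtained from `N` by successively folding at nodes
carrying the labels in the list `ls`. -/
inductive IsFoldSeq : IMLN X Λ → List Λ → IMLN X Λ → Prop
  | nil (N : IMLN X Λ) : IsFoldSeq N [] N
  | cons {N M M' : IMLN X Λ} {l : Λ} {ls : List Λ} :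
      (∃ u : N.V, N.retLabel u = l ∧ IsFoldAt N M u) → IsFoldSeq M ls M' →
      IsFoldSeq N (l :: ls) M'

/-- Pseudo-network condition (i): no reticulation node descends from an elementary node. -/
def PseudoCondI (N : IMLN X Λ) : Prop :=
  ∀ e r : N.V, N.IsElem e → N.IsRet r → ¬ N.Reaches e r

/-- Pseudo-network condition (ii): every node of `E_max(N)` has a mate with the
same label and isomorphic rooted subnetwork. -/
def PseudoCondII (N : IMLN X Λ) : Prop :=
  ∀ u : N.V, N.IsEMax u → ∃ v : N.V, v ≠ u ∧ N.IsEMax v ∧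
    N.retLabel v = N.retLabel u ∧ Isom (N.sub u) (N.sub v)

/-- Fuelled version of the recursive definition of pseudo-networks. -/
def IsPseudoN : ℕ → IMLN X Λ → Prop
  | 0, N => PseudoCondI N ∧ PseudoCondII N
  | n + 1, N => PseudoCondI N ∧ PseudoCondII N ∧
      ∀ (u : N.V) (N' : IMLN X Λ), N.IsEMax u → IsFoldAt N N' u → IsPseudoN n N'

/-- `N` is a pseudo-network: conditions (i) and (ii) hold, and every folding at a
node of `E_max(N)` yields again a pseudo-network. -/
def IsPseudo (N : IMLN X Λ) : Prop := ∀ n : ℕ, IsPseudoN n N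

/-- The polynomial ring `ℤ[x₁,…,xₙ,λ₁,…,λᵣ,y]`, with one variable for each leaf
label, one for each internal label, and one extra variable `y`. -/
abbrev PolyRing (X Λ : Type) := MvPolynomial (X ⊕ (Λ ⊕ Unit)) ℤ

/-- The variable `x_i`. -/
noncomputable def xVar (x : X) : PolyRing X Λ := MvPolynomial.X (Sum.inl x)

/-- The variable `λ_i`. -/
noncomputable def lVar (l : Λ) : PolyRing X Λ := MvPolynomial.X (Sum.inr (Sum.inl l))

/-- The variable `y`. -/
noncomputable def yVar : PolyRing X Λ := MvPolynomial.X (Sum.inr (Sum.inr ()))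

/-- `P` is the polynomial assignment `p` on the nodes of `N`:
`p(u) = φ(u)` on leaves, `p(u) = y + p(v₁)p(v₂)` on internal tree nodes with
children `v₁ ≠ v₂`, and `p(u) = ℓ(u)·p(v)` on nodes with a single child `v`. -/
def IsPolyAssignment (N : IMLN X Λ) (P : N.V → PolyRing X Λ) : Prop :=
  (∀ v : N.V, N.IsLeaf v → P v = xVar (N.leafLabel v)) ∧
  (∀ v v₁ v₂ : N.V, v₁ ≠ v₂ → N.Arc v v₁ → N.Arc v v₂ →
      P v = yVar + P v₁ * P v₂) ∧
  (∀ v w : N.V, N.outDeg v = 1 → N.Arc v w →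
      P v = lVar (N.retLabel v) * P w)

/-- The action `σ·p` of a permutation of the labels (fixing `X` and `Λ` setwise,
and fixing `y`) on polynomials, by renaming variables. -/
noncomputable def permRename (σX : Equiv.Perm X) (σΛ : Equiv.Perm Λ) (p : PolyRing X Λ) : PolyRing X Λ :=
  MvPolynomial.rename (Sum.map (⇑σX) (Sum.map (⇑σΛ) id)) p

/-- A strong path: a directed path all of whose intermediate nodes are elementary
or reticulation nodes.  `StrongReach N u v` says that `u` is a strong ancestor of
`v` (equivalently, `v` is a strong descendant of `u`). -/
inductive StrongReach (N : IMLN X Λ) : N.V → N.V → Prop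
  | refl (u : N.V) : StrongReach N u u
  | single {u v : N.V} : N.Arc u v → StrongReach N u v
  | cons {u w v : N.V} : N.Arc u w → (N.IsElem w ∨ N.IsRet w) →
      StrongReach N w v → StrongReach N u v

/-- `N₁` and `N₂` are equivalent modulo strong paths, with respect to the label
permutation `(σX, σΛ)` and polynomial assignments `P₁`, `P₂`:
(i) `p(N₁) = σ·p(N₂)`; (ii) there is a bijection `f` between the tree nodes
preserving strong descendance; (iii) `p(u) = σ·p(f(u))` for every tree node `u`. -/
def EquivModSP (N₁ N₂ : IMLN X Λ) (P₁ : N₁.V → PolyRing X Λ) (P₂ : N₂.V → PolyRing X Λ)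
    (σX : Equiv.Perm X) (σΛ : Equiv.Perm Λ) : Prop :=
  P₁ N₁.root = permRename σX σΛ (P₂ N₂.root) ∧
  ∃ f : {v : N₁.V // N₁.IsTreeNode v} ≃ {v : N₂.V // N₂.IsTreeNode v},
    (∀ u v : {v : N₁.V // N₁.IsTreeNode v},
        StrongReach N₁ u.1 v.1 → StrongReach N₂ (f u).1 (f v).1) ∧
    (∀ u : {v : N₁.V // N₁.IsTreeNode v}, P₁ u.1 = permRename σX σΛ (P₂ (f u).1))

/-- A tree node `u` is separable if either both of its children are tree nodes, or
some tree node `u₁ ≠ u` is a strong ancestor of one child `c` of `u` and either is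
a strong ancestor of no other strong descendant of `u`, or is also a strong
ancestor of one of the strong descendants of `c`. -/
def IsSeparableNode (N : IMLN X Λ) (u : N.V) : Prop :=
  N.IsTreeNode u → ∀ v₁ v₂ : N.V, v₁ ≠ v₂ → N.Arc u v₁ → N.Arc u v₂ →
    ((N.IsTreeNode v₁ ∧ N.IsTreeNode v₂) ∨
      ∃ u₁ : N.V, u₁ ≠ u ∧ N.IsTreeNode u₁ ∧
        ∃ c : N.V, (c = v₁ ∨ c = v₂) ∧ StrongReach N u₁ c ∧
          ((∀ w : N.V, StrongReach N u w → w ≠ c → ¬ StrongReach N u₁ w) ∨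
           (∃ w : N.V, w ≠ c ∧ StrongReach N c w ∧ StrongReach N u₁ w)))

/-- A network is separable if all its tree nodes are separable. -/
def IsSeparable (N : IMLN X Λ) : Prop := ∀ u : N.V, N.IsSeparableNode u

/-- A (rooted binary) phylogenetic network: an IMLN with no elementary nodes, root
of out-degree two, and bijective leaf labelling (internal labels are ignored). -/
def IsPhyloNet (N : IMLN X Λ) : Prop :=
  N.IsIMLN ∧ (∀ v : N.V, ¬ N.IsElem v) ∧ N.outDeg N.root = 2 ∧
    (∀ x : X, ∃! v : N.V, N.IsLeaf v ∧ N.leafLabel v = x)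

/-- `N'` is obtained from `N` by a single cherry-reduction: either reducing a leaf
`b` of a cherry `{a,b}` (deleting `b` and suppressing the resulting elementary
node, the root moving to `a` if the common parent was the root), or cutting a
reticulated cherry `{a,b}` (deleting the arc `(p_a,p_b)` and suppressing the two
resulting elementary nodes). -/
def IsCherryReduce (N N' : IMLN X Λ) : Prop :=
  (∃ a b pa : N.V, a ≠ b ∧ N.IsLeaf a ∧ N.IsLeaf b ∧ N.Arc pa a ∧ N.Arc pa b ∧
    ∃ h : N'.V → N.V,
      Function.Injective h ∧
      (∀ x : N'.V, h x ≠ b ∧ h x ≠ pa) ∧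
      (∀ c : N.V, c ≠ b → c ≠ pa → ∃ x, h x = c) ∧
      (∀ x : N'.V, N'.leafLabel x = N.leafLabel (h x)) ∧
      ((pa = N.root ∧ h N'.root = a) ∨ (pa ≠ N.root ∧ h N'.root = N.root)) ∧
      (∀ x y : N'.V, N'.Arc x y ↔
        (N.Arc (h x) (h y) ∨ (N.Arc (h x) pa ∧ h y = a)))) ∨
  (∃ a b pa pb : N.V, a ≠ b ∧ N.IsLeaf a ∧ N.IsLeaf b ∧ N.Arc pa a ∧ N.Arc pb b ∧
    N.IsRet pb ∧ N.Arc pa pb ∧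
    ∃ h : N'.V → N.V,
      Function.Injective h ∧
      (∀ x : N'.V, h x ≠ pa ∧ h x ≠ pb) ∧
      (∀ c : N.V, c ≠ pa → c ≠ pb → ∃ x, h x = c) ∧
      (∀ x : N'.V, N'.leafLabel x = N.leafLabel (h x)) ∧
      ((pa = N.root ∧ h N'.root = a) ∨ (pa ≠ N.root ∧ h N'.root = N.root)) ∧
      (∀ x y : N'.V, N'.Arc x y ↔
        (N.Arc (h x) (h y) ∨ (N.Arc (h x) pa ∧ h y = a) ∨ (N.Arc (h x) pb ∧ h y = b))))

/-- A network is orchard if some sequence of cherry-reductions reduces it to a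
single vertex. -/
inductive IsOrchard : IMLN X Λ → Prop
  | single (N : IMLN X Λ) : (∀ v : N.V, v = N.root) → IsOrchard N
  | step {N N' : IMLN X Λ} : IsCherryReduce N N' → IsOrchard N' → IsOrchard N

/-- `ArcPath N u v n`: there is a directed path of length `n` from `u` to `v`. -/
inductive ArcPath (N : IMLN X Λ) : N.V → N.V → ℕ → Prop
  | refl (u : N.V) : ArcPath N u u 0
  | step {u w v : N.V} {n : ℕ} : N.Arc u w → ArcPath N w v n → ArcPath N u v (n + 1)

end IMLN

/-!
Unfolding at a minimal reticulation `u` leaves two elementary copies of `u`, and they are the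
only elementary nodes carrying the label of `u`. Folding at that label therefore deletes one
copy with everything below it and redirects the arc into it to the other copy. Whichever copy
is deleted, the result is `N`: both `N` and the folded network arise from the unfolded one by
this prune-and-regraft, which determines a network up to isomorphism.
Folding in reverse order thus undoes the unfoldings one at a time.
-/

namespace IMLN

variable {X Λ : Type}

instance finite_V (N : IMLN X Λ) : Finite N.V :=
  @Finite.of_fintype _ N.fintypeV

lemma not_reaches_of_arc {N : IMLN X Λ} (hac : ∀ v : N.V, ¬ Relation.TransGen N.Arc v v)
    {a b : N.V} (hab : N.Arc a b) : ¬ N.Reaches b a :=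
  fun hba => hac a (Relation.TransGen.head' hab hba)

lemma ne_of_reaches_of_arc {N : IMLN X Λ} (hac : ∀ v : N.V, ¬ Relation.TransGen N.Arc v v)
    {u a b : N.V} (ha : N.Reaches u a) (hab : N.Arc a b) : b ≠ u :=
  fun hb => not_reaches_of_arc hac (hb ▸ hab) ha

lemma arc_iff_of_inDeg_eq_two {N : IMLN X Λ} {u v₁ v₂ : N.V} (h : N.inDeg u = 2)
    (h12 : v₁ ≠ v₂) (h1 : N.Arc v₁ u) (h2 : N.Arc v₂ u) (a : N.V) :
    N.Arc a u ↔ a = v₁ ∨ a = v₂ := by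
  have hsub : ({v₁, v₂} : Set N.V) ⊆ {x | N.Arc x u} := by
    rintro x (rfl | rfl) <;> assumption
  have heq := Set.eq_of_subset_of_ncard_le hsub (by rw [Set.ncard_pair h12, ← h]; rfl)
  exact (Set.ext_iff.1 heq a).symm

lemma eq_of_arc_of_inDeg_le_one {N : IMLN X Λ} {a b v : N.V} (h : N.inDeg v ≤ 1)
    (ha : N.Arc a v) (hb : N.Arc b v) : a = b :=
  (Set.ncard_le_one (Set.toFinite _)).1 h a ha b hb

lemma isRet_or_isElem_of_outDeg_eq_one {N : IMLN X Λ} {v : N.V} (hin : N.inDeg v ≤ 2)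
    (hout : N.outDeg v = 1) : N.IsRet v ∨ N.IsElem v := by
  unfold IsRet IsElem
  omega

section ArcEquiv

variable {A B : IMLN X Λ} (φ : A.V ≃ B.V)
  (hφ : ∀ a b : A.V, A.Arc a b ↔ B.Arc (φ a) (φ b))
include hφ

lemma reaches_iff_of_arc_iff {a b : A.V} : A.Reaches a b ↔ B.Reaches (φ a) (φ b) := by
  refine ⟨fun h => Relation.ReflTransGen.lift φ (fun a b => (hφ a b).1) _ _ h, fun h => ?_⟩
  have hφ' : ∀ x y, B.Arc x y → A.Arc (φ.symm x) (φ.symm y) :=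
    fun x y hxy => (hφ _ _).2 (by simpa using hxy)
  simpa [Function.onFun, Reaches] using Relation.ReflTransGen.lift φ.symm hφ' _ _ h

lemma outDeg_eq_of_arc_iff (a : A.V) : A.outDeg a = B.outDeg (φ a) := by
  have : {y | B.Arc (φ a) y} = φ '' {y | A.Arc a y} := by
    ext y
    simp [hφ]
  rw [outDeg, outDeg, this, Set.ncard_image_of_injective _ φ.injective]

lemma inDeg_eq_of_arc_iff (a : A.V) : A.inDeg a = B.inDeg (φ a) := by
  have : {y | B.Arc y (φ a)} = φ '' {y | A.Arc y a} := by
    ext y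
    simp [hφ]
  rw [inDeg, inDeg, this, Set.ncard_image_of_injective _ φ.injective]

lemma isElem_iff_of_arc_iff (a : A.V) : A.IsElem a ↔ B.IsElem (φ a) := by
  rw [IsElem, IsElem, inDeg_eq_of_arc_iff φ hφ, outDeg_eq_of_arc_iff φ hφ]

lemma isRet_iff_of_arc_iff (a : A.V) : A.IsRet a ↔ B.IsRet (φ a) := by
  rw [IsRet, IsRet, inDeg_eq_of_arc_iff φ hφ, outDeg_eq_of_arc_iff φ hφ]

end ArcEquiv

lemma isom_refl (N : IMLN X Λ) : Isom N N :=
  ⟨Equiv.refl N.V, fun _ _ => Iff.rfl, fun _ _ => rfl, fun _ _ => rfl⟩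

/-- The part of `IsILPN` that survives unfolding. -/
structure UnfoldInvariant (N : IMLN X Λ) : Prop where
  acyclic : ∀ v : N.V, ¬ Relation.TransGen N.Arc v v
  inDeg_le_one_or_isRet : ∀ v : N.V, N.inDeg v ≤ 1 ∨ N.IsRet v
  retInj : ∀ u v : N.V, N.IsRet u → N.IsRet v → N.retLabel u = N.retLabel v → u = v
  retElemLabels : ∀ u v : N.V, N.IsRet u → N.IsElem v → N.retLabel u ≠ N.retLabel v

lemma UnfoldInvariant.of_isILPN {N : IMLN X Λ} (h : N.IsILPN) : N.UnfoldInvariant := by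
  obtain ⟨hN, -, -, -⟩ := h
  refine ⟨hN.acyclic, fun v => ?_, hN.retInj, hN.retElemLabels⟩
  by_cases hv : v = N.root
  · left
    rw [hv, hN.rootIn]
    omega
  · rcases hN.degrees v hv with ⟨h1, -⟩ | h2
    · exact Or.inl h1.le
    · exact Or.inr h2

lemma UnfoldInvariant.inDeg_le_two {N : IMLN X Λ} (hN : N.UnfoldInvariant) (v : N.V) :
    N.inDeg v ≤ 2 := by
  rcases hN.inDeg_le_one_or_isRet v with h | h
  · omega
  · exact h.1.le

namespace IsMinRet

variable {N : IMLN X Λ} {u : N.V}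

lemma inDeg_le_one (hN : N.UnfoldInvariant) (hu : N.IsMinRet u) {b : N.V}
    (hb : N.Reaches u b) (hbu : b ≠ u) : N.inDeg b ≤ 1 :=
  (hN.inDeg_le_one_or_isRet b).resolve_right fun hr => hbu (hu.2 b hr hb)

lemma not_reaches_of_arc (hN : N.UnfoldInvariant) (hu : N.IsMinRet u) {a b : N.V}
    (ha : ¬ N.Reaches u a) (hab : N.Arc a b) (hbu : b ≠ u) : ¬ N.Reaches u b := by
  intro hb
  -- a second parent of `b` below `u` would make `b` a reticulation below `u`
  obtain ⟨p, hp, hpb⟩ := (Relation.ReflTransGen.cases_tail hb).resolve_left hbu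
  exact ha (eq_of_arc_of_inDeg_le_one (hu.inDeg_le_one hN hb hbu) hpb hab ▸ hp)

end IsMinRet

/-- `N₀` is `N` with everything below `V` pruned and each arc into `V` redirected to `W`;
`emb` identifies `N₀` with the nodes of `N` not below `V`. -/
structure PruneRegraft (N₀ N : IMLN X Λ) (V W : N.V) where
  emb : N₀.V → N.V
  emb_injective : Function.Injective emb
  not_reaches_emb : ∀ a, ¬ N.Reaches V (emb a)
  exists_emb_eq : ∀ x, ¬ N.Reaches V x → ∃ a, emb a = x
  arc_iff : ∀ a b, N₀.Arc a b ↔ N.Arc (emb a) (emb b) ∨ (N.Arc (emb a) V ∧ emb b = W)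
  leafLabel_emb : ∀ a, N.IsLeaf (emb a) → N₀.leafLabel a = N.leafLabel (emb a)
  retLabel_emb : ∀ a, N.IsRet (emb a) ∨ N.IsElem (emb a) →
    N₀.retLabel a = N.retLabel (emb a)

/-- Conditions on `V` and `W` under which a `PruneRegraft` preserves out-degrees. -/
structure RegraftSite (N : IMLN X Λ) (V W : N.V) : Prop where
  eq_of_arc_of_not_reaches : ∀ x y, ¬ N.Reaches V x → N.Arc x y → N.Reaches V y → y = V
  not_arc : ∀ p, N.Arc p V → ¬ N.Arc p W
  not_reaches : ¬ N.Reaches V W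

namespace PruneRegraft

variable {N₀ N : IMLN X Λ} {V W : N.V} (R : PruneRegraft N₀ N V W)

noncomputable def equivNotReaches : N₀.V ≃ {x : N.V // ¬ N.Reaches V x} :=
  Equiv.ofBijective (fun a => ⟨R.emb a, R.not_reaches_emb a⟩)
    ⟨fun _ _ h => R.emb_injective (congrArg Subtype.val h),
      fun x => (R.exists_emb_eq x.1 x.2).imp fun _ h => Subtype.ext h⟩

lemma emb_equivNotReaches_symm (x : {x : N.V // ¬ N.Reaches V x}) :
    R.emb (R.equivNotReaches.symm x) = x.1 :=
  congrArg Subtype.val (R.equivNotReaches.apply_symm_apply x)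

lemma image_children (hS : RegraftSite N V W) (a : N₀.V) :
    R.emb '' {b | N₀.Arc a b} =
      {y | N.Arc (R.emb a) y ∧ y ≠ V} ∪ {y | N.Arc (R.emb a) V ∧ y = W} := by
  ext y
  constructor
  · rintro ⟨b, hab, rfl⟩
    rcases (R.arc_iff a b).1 hab with h | h
    · refine Or.inl ⟨h, fun hV => R.not_reaches_emb b ?_⟩
      rw [hV]
      exact Relation.ReflTransGen.refl
    · exact Or.inr h
  · rintro (⟨hy, hyV⟩ | ⟨hV, rfl⟩)
    · obtain ⟨b, rfl⟩ := R.exists_emb_eq y fun hr =>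
        hyV (hS.eq_of_arc_of_not_reaches _ _ (R.not_reaches_emb a) hy hr)
      exact ⟨b, (R.arc_iff a b).2 (Or.inl hy), rfl⟩
    · obtain ⟨b, hb⟩ := R.exists_emb_eq _ hS.not_reaches
      exact ⟨b, (R.arc_iff a b).2 (Or.inr ⟨hV, hb⟩), hb⟩

lemma outDeg_eq (hS : RegraftSite N V W) (a : N₀.V) : N₀.outDeg a = N.outDeg (R.emb a) := by
  rw [outDeg, ← Set.ncard_image_of_injective _ R.emb_injective, R.image_children hS, outDeg]
  by_cases hV : N.Arc (R.emb a) V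
  · have hW : W ∉ {y | N.Arc (R.emb a) y} \ {V} := fun h => hS.not_arc _ hV h.1
    have : {y | N.Arc (R.emb a) y ∧ y ≠ V} ∪ {y | N.Arc (R.emb a) V ∧ y = W} =
        insert W ({y | N.Arc (R.emb a) y} \ {V}) := by
      ext y
      simp only [Set.mem_union, Set.mem_ofPred_eq, Set.mem_insert_iff, Set.mem_sdiff,
        Set.mem_singleton_iff, hV, true_and]
      tauto
    rw [this, Set.ncard_insert_of_notMem hW]
    exact Set.ncard_sdiff_singleton_add_one hV
  · congr 1
    ext y
    simp only [Set.mem_union, Set.mem_ofPred_eq, hV, false_and, or_false, and_iff_left_iff_imp]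
    rintro hy rfl
    exact hV hy

end PruneRegraft

theorem isom_of_pruneRegraft {N₁ N₂ N : IMLN X Λ} {V W : N.V} (hdeg : ∀ x, N.inDeg x ≤ 2)
    (hS : RegraftSite N V W) (R₁ : PruneRegraft N₁ N V W) (R₂ : PruneRegraft N₂ N V W) :
    Isom N₁ N₂ := by
  set f := R₁.equivNotReaches.trans R₂.equivNotReaches.symm
  have hf : ∀ a, R₂.emb (f a) = R₁.emb a := fun a => R₂.emb_equivNotReaches_symm _
  refine ⟨f, fun a b => ?_, fun a ha => ?_, fun a ha => ?_⟩
  · rw [R₁.arc_iff, R₂.arc_iff, hf, hf]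
  · have hleaf : N.IsLeaf (R₁.emb a) := by rwa [IsLeaf, ← R₁.outDeg_eq hS]
    rw [R₁.leafLabel_emb a hleaf, ← hf, R₂.leafLabel_emb _ (by rwa [hf])]
    rfl
  · have hout : N.outDeg (R₁.emb a) = 1 := by
      rw [← R₁.outDeg_eq hS]
      rcases ha with h | h <;> exact h.2
    have hre := isRet_or_isElem_of_outDeg_eq_one (hdeg _) hout
    rw [R₁.retLabel_emb a hre, ← hf, R₂.retLabel_emb _ (by rwa [hf])]
    rfl

noncomputable def PruneRegraft.mapEquiv {N₀ A B : IMLN X Λ} {V W : A.V}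
    (R : PruneRegraft N₀ A V W) (φ : A.V ≃ B.V)
    (hφ : ∀ a b : A.V, A.Arc a b ↔ B.Arc (φ a) (φ b))
    (hleaf : ∀ z : A.V, A.IsLeaf z → A.leafLabel z = B.leafLabel (φ z))
    (hret : ∀ z : A.V, A.IsRet z ∨ A.IsElem z → A.retLabel z = B.retLabel (φ z)) :
    PruneRegraft N₀ B (φ V) (φ W) where
  emb a := φ (R.emb a)
  emb_injective := φ.injective.comp R.emb_injective
  not_reaches_emb a h := R.not_reaches_emb a ((reaches_iff_of_arc_iff φ hφ).2 h)
  exists_emb_eq x hx := by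
    obtain ⟨a, ha⟩ := R.exists_emb_eq (φ.symm x) fun h =>
      hx (by simpa using (reaches_iff_of_arc_iff φ hφ).1 h)
    exact ⟨a, by simp [ha]⟩
  arc_iff a b := by rw [R.arc_iff, hφ, hφ, φ.injective.eq_iff]
  leafLabel_emb a ha := by
    rw [IsLeaf, ← outDeg_eq_of_arc_iff φ hφ] at ha
    rw [R.leafLabel_emb a ha, hleaf _ ha]
  retLabel_emb a ha := by
    rw [← isRet_iff_of_arc_iff φ hφ, ← isElem_iff_of_arc_iff φ hφ] at ha
    rw [R.retLabel_emb a ha, hret _ ha]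

lemma IsFoldAt.exists_pruneRegraft {N M : IMLN X Λ} {w : N.V} (h : IsFoldAt N M w) :
    ∃ v : N.V, v ≠ w ∧ N.IsElem v ∧ N.IsElem w ∧ N.retLabel v = N.retLabel w ∧
      Nonempty (PruneRegraft M N v w) := by
  obtain ⟨hw, v, hvw, hv, hlab, -, vp, hvp, h, hinj, hnr, hsurj, -, hleaf, hret, harc⟩ := h
  refine ⟨v, hvw, hv.1, hw.1, hlab, ⟨⟨h, hinj, hnr, hsurj, fun x y => ?_,
    fun x _ => hleaf x, fun x _ => hret x⟩⟩⟩
  have hparent : ∀ p, N.Arc p v ↔ p = vp :=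
    fun p => ⟨fun hp => eq_of_arc_of_inDeg_le_one hv.1.1 hp hvp, fun hp => hp ▸ hvp⟩
  rw [harc, hparent]

/-- The data of an unfolding `N' = U(N, u)` (see `IsUnfoldAt`) at a minimal reticulation `u`. -/
structure UnfoldData (N N' : IMLN X Λ) (u : N.V) where
  g : N.V → N'.V
  g' : N.V → N'.V
  v₁ : N.V
  v₂ : N.V
  invariant : N.UnfoldInvariant
  isMinRet : N.IsMinRet u
  g_injective : Function.Injective g
  g'_injOn : ∀ a b : N.V, N.Reaches u a → N.Reaches u b → g' a = g' b → a = b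
  g_ne_g' : ∀ a b : N.V, N.Reaches u b → g a ≠ g' b
  eq_g_or_eq_g' : ∀ x : N'.V, (∃ a, x = g a) ∨ (∃ a, N.Reaches u a ∧ x = g' a)
  leafLabel_g : ∀ a : N.V, N'.leafLabel (g a) = N.leafLabel a
  retLabel_g : ∀ a : N.V, N'.retLabel (g a) = N.retLabel a
  leafLabel_g' : ∀ a : N.V, N.Reaches u a → N'.leafLabel (g' a) = N.leafLabel a
  retLabel_g' : ∀ a : N.V, N.Reaches u a → N'.retLabel (g' a) = N.retLabel a
  v₁_ne_v₂ : v₁ ≠ v₂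
  arc_v₁ : N.Arc v₁ u
  arc_v₂ : N.Arc v₂ u
  arc_iff : ∀ x y : N'.V, N'.Arc x y ↔
      ((∃ a b : N.V, N.Arc a b ∧ b ≠ u ∧ x = g a ∧ y = g b) ∨
       (∃ a b : N.V, N.Reaches u a ∧ N.Reaches u b ∧ N.Arc a b ∧ x = g' a ∧ y = g' b) ∨
       (x = g v₁ ∧ y = g u) ∨
       (x = g v₂ ∧ y = g' u))

lemma IsUnfoldAt.nonempty_unfoldData {N N' : IMLN X Λ} {u : N.V} (hN : N.UnfoldInvariant)
    (hu : N.IsMinRet u) (h : IsUnfoldAt N N' u) : Nonempty (UnfoldData N N' u) := by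
  obtain ⟨g, g', hg, hg', hd, hx, -, hl, hr, hl', hr', v₁, v₂, hne, h₁, h₂, harc⟩ := h
  exact ⟨⟨g, g', v₁, v₂, hN, hu, hg, hg', hd, hx, hl, hr, hl', hr', hne, h₁, h₂, harc⟩⟩

namespace UnfoldData

variable {N N' : IMLN X Λ} {u : N.V} (C : UnfoldData N N' u)

lemma arc_u_iff (a : N.V) : N.Arc a u ↔ a = C.v₁ ∨ a = C.v₂ :=
  arc_iff_of_inDeg_eq_two C.isMinRet.1.1 C.v₁_ne_v₂ C.arc_v₁ C.arc_v₂ a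

lemma not_reaches_v₁ : ¬ N.Reaches u C.v₁ := not_reaches_of_arc C.invariant.acyclic C.arc_v₁

lemma not_reaches_v₂ : ¬ N.Reaches u C.v₂ := not_reaches_of_arc C.invariant.acyclic C.arc_v₂

lemma arc_g_g {a b : N.V} (hab : N.Arc a b) (hbu : b ≠ u) : N'.Arc (C.g a) (C.g b) :=
  (C.arc_iff _ _).2 (Or.inl ⟨a, b, hab, hbu, rfl, rfl⟩)

lemma arc_g'_g' {a b : N.V} (ha : N.Reaches u a) (hab : N.Arc a b) :
    N'.Arc (C.g' a) (C.g' b) :=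
  (C.arc_iff _ _).2 (Or.inr (Or.inl ⟨a, b, ha, ha.tail hab, hab, rfl, rfl⟩))

lemma arc_g_v₁ : N'.Arc (C.g C.v₁) (C.g u) :=
  (C.arc_iff _ _).2 (Or.inr (Or.inr (Or.inl ⟨rfl, rfl⟩)))

lemma arc_g_v₂ : N'.Arc (C.g C.v₂) (C.g' u) :=
  (C.arc_iff _ _).2 (Or.inr (Or.inr (Or.inr ⟨rfl, rfl⟩)))

lemma arc_from_g {a : N.V} {y : N'.V} (h : N'.Arc (C.g a) y) :
    (∃ b, N.Arc a b ∧ b ≠ u ∧ y = C.g b) ∨ (a = C.v₁ ∧ y = C.g u) ∨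
      (a = C.v₂ ∧ y = C.g' u) := by
  rcases (C.arc_iff _ _).1 h with ⟨a', b, hab, hbu, hx, hy⟩ | ⟨a', b, ha', -, -, hx, -⟩ |
      ⟨hx, hy⟩ | ⟨hx, hy⟩
  · exact Or.inl ⟨b, C.g_injective hx ▸ hab, hbu, hy⟩
  · exact absurd hx (C.g_ne_g' a a' ha')
  · exact Or.inr (Or.inl ⟨C.g_injective hx, hy⟩)
  · exact Or.inr (Or.inr ⟨C.g_injective hx, hy⟩)

lemma arc_from_g' {a : N.V} {y : N'.V} (ha : N.Reaches u a) (h : N'.Arc (C.g' a) y) :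
    ∃ b, N.Reaches u b ∧ N.Arc a b ∧ y = C.g' b := by
  rcases (C.arc_iff _ _).1 h with ⟨a', -, -, -, hx, -⟩ | ⟨a', b, ha', hb, hab, hx, hy⟩ |
      ⟨hx, -⟩ | ⟨hx, -⟩
  · exact absurd hx (C.g_ne_g' a' a ha).symm
  · exact ⟨b, hb, C.g'_injOn a' a ha' ha hx.symm ▸ hab, hy⟩
  · exact absurd hx (C.g_ne_g' C.v₁ a ha).symm
  · exact absurd hx (C.g_ne_g' C.v₂ a ha).symm

lemma arc_to_g {b : N.V} {x : N'.V} (h : N'.Arc x (C.g b)) :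
    (∃ a, N.Arc a b ∧ b ≠ u ∧ x = C.g a) ∨ (b = u ∧ x = C.g C.v₁) := by
  rcases (C.arc_iff _ _).1 h with ⟨a', b', hab, hbu, hx, hy⟩ | ⟨-, b', -, hb, -, -, hy⟩ |
      ⟨hx, hy⟩ | ⟨-, hy⟩
  · exact Or.inl ⟨a', C.g_injective hy ▸ hab, C.g_injective hy ▸ hbu, hx⟩
  · exact absurd hy (C.g_ne_g' b b' hb)
  · exact Or.inr ⟨C.g_injective hy, hx⟩
  · exact absurd hy (C.g_ne_g' b u Relation.ReflTransGen.refl)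

lemma arc_to_g' {b : N.V} {x : N'.V} (hb : N.Reaches u b) (h : N'.Arc x (C.g' b)) :
    (∃ a, N.Reaches u a ∧ N.Arc a b ∧ x = C.g' a) ∨ (b = u ∧ x = C.g C.v₂) := by
  rcases (C.arc_iff _ _).1 h with ⟨-, b', -, -, -, hy⟩ | ⟨a', b', ha', hb', hab, hx, hy⟩ |
      ⟨-, hy⟩ | ⟨hx, hy⟩
  · exact absurd hy (C.g_ne_g' b' b hb).symm
  · exact Or.inl ⟨a', ha', C.g'_injOn b' b hb' hb hy.symm ▸ hab, hx⟩
  · exact absurd hy (C.g_ne_g' u b hb).symm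
  · exact Or.inr ⟨C.g'_injOn u b Relation.ReflTransGen.refl hb hy.symm ▸ rfl, hx⟩

lemma reaches_g' {a : N.V} (ha : N.Reaches u a) : N'.Reaches (C.g' u) (C.g' a) := by
  induction ha with
  | refl => exact Relation.ReflTransGen.refl
  | tail hb hbc ih => exact ih.tail (C.arc_g'_g' hb hbc)

lemma exists_of_reaches_g' {x : N'.V} (h : N'.Reaches (C.g' u) x) :
    ∃ a, N.Reaches u a ∧ x = C.g' a := by
  induction h with
  | refl => exact ⟨u, Relation.ReflTransGen.refl, rfl⟩
  | tail _ hxy ih =>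
    obtain ⟨a, ha, rfl⟩ := ih
    obtain ⟨b, hb, -, rfl⟩ := C.arc_from_g' ha hxy
    exact ⟨b, hb, rfl⟩

lemma regraftSite : RegraftSite N' (C.g' u) (C.g u) where
  eq_of_arc_of_not_reaches x y hx hxy hy := by
    obtain ⟨b, hb, rfl⟩ := C.exists_of_reaches_g' hy
    rcases C.arc_to_g' hb hxy with ⟨a, ha, -, rfl⟩ | ⟨rfl, -⟩
    · exact absurd (C.reaches_g' ha) hx
    · rfl
  not_arc p hp h := by
    rcases C.arc_to_g' Relation.ReflTransGen.refl hp with ⟨a, ha, hau, -⟩ | ⟨-, rfl⟩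
    · exact not_reaches_of_arc C.invariant.acyclic hau ha
    rcases C.arc_from_g h with ⟨b, -, hbu, hb⟩ | ⟨h₂₁, -⟩ | ⟨-, h⟩
    · exact hbu (C.g_injective hb).symm
    · exact C.v₁_ne_v₂ h₂₁.symm
    · exact C.g_ne_g' u u Relation.ReflTransGen.refl h
  not_reaches h := by
    obtain ⟨a, ha, h⟩ := C.exists_of_reaches_g' h
    exact C.g_ne_g' u a ha h

def pruneRegraft : PruneRegraft N N' (C.g' u) (C.g u) where
  emb := C.g
  emb_injective := C.g_injective
  not_reaches_emb a h := by
    obtain ⟨b, hb, h⟩ := C.exists_of_reaches_g' h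
    exact C.g_ne_g' a b hb h
  exists_emb_eq x hx := by
    rcases C.eq_g_or_eq_g' x with ⟨a, rfl⟩ | ⟨a, ha, rfl⟩
    · exact ⟨a, rfl⟩
    · exact absurd (C.reaches_g' ha) hx
  arc_iff a b := by
    constructor
    · intro hab
      by_cases hbu : b = u
      · subst hbu
        rcases (C.arc_u_iff a).1 hab with rfl | rfl
        · exact Or.inl C.arc_g_v₁
        · exact Or.inr ⟨C.arc_g_v₂, rfl⟩
      · exact Or.inl (C.arc_g_g hab hbu)
    · rintro (h | ⟨h, hb⟩)
      · rcases C.arc_from_g h with ⟨c, hac, -, hc⟩ | ⟨rfl, hb⟩ | ⟨-, hb⟩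
        · rwa [C.g_injective hc]
        · rw [C.g_injective hb]
          exact C.arc_v₁
        · exact absurd hb (C.g_ne_g' b u Relation.ReflTransGen.refl)
      · rcases C.arc_from_g h with ⟨c, -, -, hc⟩ | ⟨-, hc⟩ | ⟨rfl, -⟩
        · exact absurd hc (C.g_ne_g' c u Relation.ReflTransGen.refl).symm
        · exact absurd hc.symm (C.g_ne_g' u u Relation.ReflTransGen.refl)
        · rw [C.g_injective hb]
          exact C.arc_v₂
  leafLabel_emb a _ := (C.leafLabel_g a).symm
  retLabel_emb a _ := (C.retLabel_g a).symm

lemma outDeg_g (a : N.V) : N'.outDeg (C.g a) = N.outDeg a :=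
  (C.pruneRegraft.outDeg_eq C.regraftSite a).symm

open Classical in
noncomputable def altEmb (a : N.V) : N'.V := if N.Reaches u a then C.g' a else C.g a

lemma altEmb_of_reaches {a : N.V} (ha : N.Reaches u a) : C.altEmb a = C.g' a := by
  simp [altEmb, ha]

lemma altEmb_of_not_reaches {a : N.V} (ha : ¬ N.Reaches u a) : C.altEmb a = C.g a := by
  simp [altEmb, ha]

lemma altEmb_injective : Function.Injective C.altEmb := by
  intro a b h
  by_cases ha : N.Reaches u a <;> by_cases hb : N.Reaches u b
  · rw [C.altEmb_of_reaches ha, C.altEmb_of_reaches hb] at h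
    exact C.g'_injOn a b ha hb h
  · rw [C.altEmb_of_reaches ha, C.altEmb_of_not_reaches hb] at h
    exact absurd h.symm (C.g_ne_g' b a ha)
  · rw [C.altEmb_of_not_reaches ha, C.altEmb_of_reaches hb] at h
    exact absurd h (C.g_ne_g' a b hb)
  · rw [C.altEmb_of_not_reaches ha, C.altEmb_of_not_reaches hb] at h
    exact C.g_injective h

lemma altEmb_ne_g {a b : N.V} (hb : N.Reaches u b) : C.altEmb a ≠ C.g b := by
  by_cases ha : N.Reaches u a
  · rw [C.altEmb_of_reaches ha]
    exact (C.g_ne_g' b a ha).symm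
  · rw [C.altEmb_of_not_reaches ha]
    exact fun h => ha (C.g_injective h ▸ hb)

lemma arc_iff_altEmb (x y : N'.V) : N'.Arc x y ↔
    ((∃ a b : N.V, N.Arc a b ∧ b ≠ u ∧ x = C.altEmb a ∧ y = C.altEmb b) ∨
     (∃ a b : N.V, N.Reaches u a ∧ N.Reaches u b ∧ N.Arc a b ∧ x = C.g a ∧ y = C.g b) ∨
     (x = C.altEmb C.v₂ ∧ y = C.altEmb u) ∨
     (x = C.altEmb C.v₁ ∧ y = C.g u)) := by
  have hv₁ := C.altEmb_of_not_reaches C.not_reaches_v₁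
  have hv₂ := C.altEmb_of_not_reaches C.not_reaches_v₂
  have hu := C.altEmb_of_reaches (Relation.ReflTransGen.refl (a := u))
  rw [C.arc_iff, hv₁, hv₂, hu]
  constructor
  · rintro (⟨a, b, hab, hbu, rfl, rfl⟩ | ⟨a, b, ha, hb, hab, rfl, rfl⟩ | h | h)
    · by_cases ha : N.Reaches u a
      · exact Or.inr (Or.inl ⟨a, b, ha, ha.tail hab, hab, rfl, rfl⟩)
      · refine Or.inl ⟨a, b, hab, hbu, (C.altEmb_of_not_reaches ha).symm, ?_⟩
        exact (C.altEmb_of_not_reaches (C.isMinRet.not_reaches_of_arc C.invariant ha hab hbu)).symm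
    · exact Or.inl ⟨a, b, hab, ne_of_reaches_of_arc C.invariant.acyclic ha hab,
        (C.altEmb_of_reaches ha).symm, (C.altEmb_of_reaches hb).symm⟩
    · exact Or.inr (Or.inr (Or.inr h))
    · exact Or.inr (Or.inr (Or.inl h))
  · rintro (⟨a, b, hab, hbu, rfl, rfl⟩ | ⟨a, b, ha, -, hab, rfl, rfl⟩ | h | h)
    · by_cases ha : N.Reaches u a
      · rw [C.altEmb_of_reaches ha, C.altEmb_of_reaches (ha.tail hab)]
        exact Or.inr (Or.inl ⟨a, b, ha, ha.tail hab, hab, rfl, rfl⟩)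
      · rw [C.altEmb_of_not_reaches ha,
          C.altEmb_of_not_reaches (C.isMinRet.not_reaches_of_arc C.invariant ha hab hbu)]
        exact Or.inl ⟨a, b, hab, hbu, rfl, rfl⟩
    · exact Or.inl ⟨a, b, hab, ne_of_reaches_of_arc C.invariant.acyclic ha hab, rfl, rfl⟩
    · exact Or.inr (Or.inr (Or.inr h))
    · exact Or.inr (Or.inr (Or.inl h))

/-- `U(N, u)` is symmetric in the two parents of `u`, with the two copies of `N(u)` exchanged. -/
noncomputable def swap : UnfoldData N N' u where
  g := C.altEmb
  g' := C.g
  v₁ := C.v₂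
  v₂ := C.v₁
  invariant := C.invariant
  isMinRet := C.isMinRet
  g_injective := C.altEmb_injective
  g'_injOn _ _ _ _ h := C.g_injective h
  g_ne_g' _ _ hb := C.altEmb_ne_g hb
  eq_g_or_eq_g' x := by
    rcases C.eq_g_or_eq_g' x with ⟨a, rfl⟩ | ⟨a, ha, rfl⟩
    · by_cases ha : N.Reaches u a
      · exact Or.inr ⟨a, ha, rfl⟩
      · exact Or.inl ⟨a, (C.altEmb_of_not_reaches ha).symm⟩
    · exact Or.inl ⟨a, (C.altEmb_of_reaches ha).symm⟩
  leafLabel_g a := by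
    by_cases ha : N.Reaches u a
    · rw [C.altEmb_of_reaches ha, C.leafLabel_g' a ha]
    · rw [C.altEmb_of_not_reaches ha, C.leafLabel_g]
  retLabel_g a := by
    by_cases ha : N.Reaches u a
    · rw [C.altEmb_of_reaches ha, C.retLabel_g' a ha]
    · rw [C.altEmb_of_not_reaches ha, C.retLabel_g]
  leafLabel_g' a _ := C.leafLabel_g a
  retLabel_g' a _ := C.retLabel_g a
  v₁_ne_v₂ := C.v₁_ne_v₂.symm
  arc_v₁ := C.arc_v₂
  arc_v₂ := C.arc_v₁
  arc_iff := C.arc_iff_altEmb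

lemma swap_g_u : C.swap.g u = C.g' u := C.altEmb_of_reaches Relation.ReflTransGen.refl

lemma outDeg_g' {a : N.V} (ha : N.Reaches u a) : N'.outDeg (C.g' a) = N.outDeg a := by
  rw [← C.altEmb_of_reaches ha]
  exact C.swap.outDeg_g a

lemma parents_g_u : {x : N'.V | N'.Arc x (C.g u)} = {C.g C.v₁} := by
  ext x
  refine ⟨fun h => ?_, fun h => (Set.mem_singleton_iff.1 h) ▸ C.arc_g_v₁⟩
  rcases C.arc_to_g h with ⟨-, -, hbu, -⟩ | ⟨-, rfl⟩
  · exact absurd rfl hbu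
  · rfl

lemma parents_g'_u : {x : N'.V | N'.Arc x (C.g' u)} = {C.g C.v₂} := by
  ext x
  refine ⟨fun h => ?_, fun h => (Set.mem_singleton_iff.1 h) ▸ C.arc_g_v₂⟩
  rcases C.arc_to_g' Relation.ReflTransGen.refl h with ⟨a, ha, hau, -⟩ | ⟨-, rfl⟩
  · exact absurd ha (not_reaches_of_arc C.invariant.acyclic hau)
  · rfl

lemma inDeg_g_u : N'.inDeg (C.g u) = 1 := by
  rw [inDeg, C.parents_g_u, Set.ncard_singleton]

lemma inDeg_g'_u : N'.inDeg (C.g' u) = 1 := by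
  rw [inDeg, C.parents_g'_u, Set.ncard_singleton]

lemma inDeg_g {b : N.V} (hbu : b ≠ u) : N'.inDeg (C.g b) = N.inDeg b := by
  have : {x | N'.Arc x (C.g b)} = C.g '' {a | N.Arc a b} := by
    ext x
    refine ⟨fun h => ?_, ?_⟩
    · rcases C.arc_to_g h with ⟨a, hab, -, rfl⟩ | ⟨hb, -⟩
      · exact ⟨a, hab, rfl⟩
      · exact absurd hb hbu
    · rintro ⟨a, hab, rfl⟩
      exact C.arc_g_g hab hbu
  rw [inDeg, this, Set.ncard_image_of_injective _ C.g_injective, inDeg]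

lemma inDeg_g'_le {b : N.V} (hb : N.Reaches u b) (hbu : b ≠ u) :
    N'.inDeg (C.g' b) ≤ N.inDeg b := by
  have : {x | N'.Arc x (C.g' b)} ⊆ C.g' '' {a | N.Arc a b} := by
    intro x h
    rcases C.arc_to_g' hb h with ⟨a, -, hab, rfl⟩ | ⟨hb, -⟩
    · exact ⟨a, hab, rfl⟩
    · exact absurd hb hbu
  exact (Set.ncard_le_ncard this).trans Set.ncard_image_le

lemma inDeg_g'_le_one {b : N.V} (hb : N.Reaches u b) : N'.inDeg (C.g' b) ≤ 1 := by
  by_cases hbu : b = u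
  · rw [hbu, C.inDeg_g'_u]
  · exact (C.inDeg_g'_le hb hbu).trans (C.isMinRet.inDeg_le_one C.invariant hb hbu)

lemma isRet_iff {x : N'.V} : N'.IsRet x ↔ ∃ b, N.IsRet b ∧ b ≠ u ∧ x = C.g b := by
  constructor
  · intro hx
    rcases C.eq_g_or_eq_g' x with ⟨b, rfl⟩ | ⟨b, hb, rfl⟩
    · have hbu : b ≠ u := by
        rintro rfl
        have hin := hx.1
        rw [C.inDeg_g_u] at hin
        omega
      have hin : N.inDeg b = 2 := by rw [← C.inDeg_g hbu]; exact hx.1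
      refine ⟨b, ⟨hin, ?_⟩, hbu, rfl⟩
      rw [← C.outDeg_g]
      exact hx.2
    · have hin := hx.1
      have hle := C.inDeg_g'_le_one hb
      omega
  · rintro ⟨b, hb, hbu, rfl⟩
    exact ⟨by rw [C.inDeg_g hbu]; exact hb.1, by rw [C.outDeg_g]; exact hb.2⟩

lemma isElem_cases {x : N'.V} (hx : N'.IsElem x) :
    x = C.g u ∨ x = C.g' u ∨ (∃ b, N.IsElem b ∧ x = C.g b) ∨
      (∃ b, N.IsElem b ∧ N.Reaches u b ∧ x = C.g' b) := by
  rcases C.eq_g_or_eq_g' x with ⟨b, rfl⟩ | ⟨b, hb, rfl⟩ <;> by_cases hbu : b = u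
  · exact Or.inl (congrArg C.g hbu)
  · refine Or.inr (Or.inr (Or.inl ⟨b, ⟨?_, ?_⟩, rfl⟩))
    · rw [← C.inDeg_g hbu]; exact hx.1
    · rw [← C.outDeg_g]; exact hx.2
  · exact Or.inr (Or.inl (congrArg C.g' hbu))
  · have hin := C.isMinRet.inDeg_le_one C.invariant hb hbu
    refine Or.inr (Or.inr (Or.inr ⟨b, ⟨hin, ?_⟩, hb, rfl⟩))
    rw [← C.outDeg_g' hb]
    exact hx.2

lemma eq_of_isElem_of_retLabel_eq {x : N'.V} (hx : N'.IsElem x)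
    (hl : N'.retLabel x = N.retLabel u) : x = C.g u ∨ x = C.g' u := by
  rcases C.isElem_cases hx with h | h | ⟨b, hb, rfl⟩ | ⟨b, hb, hbr, rfl⟩
  · exact Or.inl h
  · exact Or.inr h
  · exact absurd (C.retLabel_g b ▸ hl).symm (C.invariant.retElemLabels u b C.isMinRet.1 hb)
  · exact absurd (C.retLabel_g' b hbr ▸ hl).symm (C.invariant.retElemLabels u b C.isMinRet.1 hb)

lemma exists_eq_g_or_eq_g' (x : N'.V) : ∃ a, x = C.g a ∨ (N.Reaches u a ∧ x = C.g' a) := by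
  rcases C.eq_g_or_eq_g' x with ⟨a, h⟩ | ⟨a, h⟩
  exacts [⟨a, Or.inl h⟩, ⟨a, Or.inr h⟩]

noncomputable def proj (x : N'.V) : N.V := (C.exists_eq_g_or_eq_g' x).choose

lemma proj_g (a : N.V) : C.proj (C.g a) = a := by
  rcases (C.exists_eq_g_or_eq_g' (C.g a)).choose_spec with h | ⟨hr, h⟩
  · exact (C.g_injective h).symm
  · exact absurd h (C.g_ne_g' _ _ hr)

lemma proj_g' {a : N.V} (ha : N.Reaches u a) : C.proj (C.g' a) = a := by
  rcases (C.exists_eq_g_or_eq_g' (C.g' a)).choose_spec with h | ⟨hr, h⟩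
  · exact absurd h.symm (C.g_ne_g' _ _ ha)
  · exact C.g'_injOn _ _ hr ha h.symm

lemma arc_proj {x y : N'.V} (h : N'.Arc x y) : N.Arc (C.proj x) (C.proj y) := by
  rcases (C.arc_iff x y).1 h with ⟨a, b, hab, -, rfl, rfl⟩ | ⟨a, b, ha, hb, hab, rfl, rfl⟩ |
      ⟨rfl, rfl⟩ | ⟨rfl, rfl⟩
  · rwa [C.proj_g, C.proj_g]
  · rwa [C.proj_g' ha, C.proj_g' hb]
  · rw [C.proj_g, C.proj_g]
    exact C.arc_v₁
  · rw [C.proj_g, C.proj_g' Relation.ReflTransGen.refl]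
    exact C.arc_v₂

lemma unfoldInvariant (C : UnfoldData N N' u) : N'.UnfoldInvariant where
  acyclic v h := C.invariant.acyclic _ (Relation.TransGen.lift C.proj (fun _ _ => C.arc_proj) _ _ h)
  inDeg_le_one_or_isRet x := by
    rcases C.eq_g_or_eq_g' x with ⟨b, rfl⟩ | ⟨b, hb, rfl⟩
    · by_cases hbu : b = u
      · rw [hbu, C.inDeg_g_u]
        exact Or.inl le_rfl
      · rcases C.invariant.inDeg_le_one_or_isRet b with h | h
        · exact Or.inl (by rwa [C.inDeg_g hbu])
        · exact Or.inr (C.isRet_iff.2 ⟨b, h, hbu, rfl⟩)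
    · exact Or.inl (C.inDeg_g'_le_one hb)
  retInj x y hx hy hl := by
    obtain ⟨b, hb, -, rfl⟩ := C.isRet_iff.1 hx
    obtain ⟨b', hb', -, rfl⟩ := C.isRet_iff.1 hy
    rw [C.retLabel_g, C.retLabel_g] at hl
    rw [C.invariant.retInj b b' hb hb' hl]
  retElemLabels x y hx hy := by
    obtain ⟨b, hb, hbu, rfl⟩ := C.isRet_iff.1 hx
    have hbu' : N.retLabel b ≠ N.retLabel u :=
      fun h => hbu (C.invariant.retInj b u hb C.isMinRet.1 h)
    rw [C.retLabel_g]
    rcases C.isElem_cases hy with rfl | rfl | ⟨c, hc, rfl⟩ | ⟨c, hc, hcr, rfl⟩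
    · rwa [C.retLabel_g]
    · rwa [C.retLabel_g' u Relation.ReflTransGen.refl]
    · rw [C.retLabel_g]; exact C.invariant.retElemLabels b c hb hc
    · rw [C.retLabel_g' c hcr]; exact C.invariant.retElemLabels b c hb hc

theorem isom_of_isFoldAt (C : UnfoldData N N' u) {Mid M : IMLN X Λ} (hiso : Isom Mid N')
    {w : Mid.V} (hw : Mid.retLabel w = N.retLabel u) (hfold : IsFoldAt Mid M w) : Isom M N := by
  obtain ⟨v, hvw, hv, hwe, hvl, ⟨R⟩⟩ := hfold.exists_pruneRegraft
  obtain ⟨φ, hφ, hleaf, hret⟩ := hiso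
  have R' := R.mapEquiv φ hφ hleaf hret
  have hcopy : ∀ z, Mid.IsElem z → Mid.retLabel z = N.retLabel u →
      φ z = C.g u ∨ φ z = C.g' u := fun z hz hzl =>
    C.eq_of_isElem_of_retLabel_eq ((isElem_iff_of_arc_iff φ hφ z).1 hz)
      ((hret z (Or.inr hz)).symm.trans hzl)
  have hdeg := C.unfoldInvariant.inDeg_le_two
  rcases hcopy v hv (hvl.trans hw) with hv' | hv' <;> rcases hcopy w hwe hw with hw' | hw'
  · exact absurd (φ.injective (hv'.trans hw'.symm)) hvw
  · rw [hv', hw', ← C.swap_g_u] at R'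
    exact isom_of_pruneRegraft hdeg C.swap.regraftSite R' C.swap.pruneRegraft
  · rw [hv', hw'] at R'
    exact isom_of_pruneRegraft hdeg C.regraftSite R' C.pruneRegraft
  · exact absurd (φ.injective (hv'.trans hw'.symm)) hvw

end UnfoldData

lemma IsFoldSeq.exists_of_append {A B : IMLN X Λ} {l₁ l₂ : List Λ}
    (h : IsFoldSeq A (l₁ ++ l₂) B) : ∃ C, IsFoldSeq A l₁ C ∧ IsFoldSeq C l₂ B := by
  induction l₁ generalizing A with
  | nil => exact ⟨A, IsFoldSeq.nil A, h⟩
  | cons l ls ih =>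
    obtain _ | ⟨hstep, hrest⟩ := h
    obtain ⟨C, h₁, h₂⟩ := ih hrest
    exact ⟨C, IsFoldSeq.cons hstep h₁, h₂⟩

lemma IsFoldSeq.exists_isFoldAt_of_singleton {A B : IMLN X Λ} {l : Λ}
    (h : IsFoldSeq A [l] B) : ∃ w : A.V, A.retLabel w = l ∧ IsFoldAt A B w := by
  obtain _ | ⟨hstep, _ | _⟩ := h
  exact hstep

theorem isom_of_isUnfoldSeq_of_isFoldSeq {N T M : IMLN X Λ} {ls : List Λ}
    (hN : N.UnfoldInvariant) (hT : IsUnfoldSeq N ls T) (hM : IsFoldSeq T ls.reverse M) :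
    Isom M N := by
  induction hT generalizing M with
  | nil N =>
    obtain _ | _ := hM
    exact isom_refl N
  | cons hstep _ ih =>
    obtain ⟨u, hu, rfl, hunf⟩ := hstep
    obtain ⟨C⟩ := hunf.nonempty_unfoldData hN hu
    rw [List.reverse_cons] at hM
    obtain ⟨Mid, hMid, hlast⟩ := hM.exists_of_append
    obtain ⟨w, hw, hfold⟩ := hlast.exists_isFoldAt_of_singleton
    exact C.isom_of_isFoldAt (ih C.unfoldInvariant hMid) hw hfold

end IMLN

theorem IMLN.fold_of_unfolding_general (X Λ : Type) (N : IMLN X Λ) (hN : N.IsILPN)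
    (us : List N.V)
    (T : IMLN X Λ) (hT : IMLN.IsUnfoldSeq N (us.map N.retLabel) T)
    (M : IMLN X Λ) (hM : IMLN.IsFoldSeq T ((us.map N.retLabel).reverse) M) :
    IMLN.Isom M N :=
  IMLN.isom_of_isUnfoldSeq_of_isFoldSeq (IMLN.UnfoldInvariant.of_isILPN hN) hT hM

/-- **Corollary (fu).** Let `N` be an internally labelled phylogenetic network.
Then `N = F(U(N))`: unfolding `N` along a compatible sequence consisting of all
its reticulation nodes and then folding back (in reverse order) recovers `N`,
up to isomorphism. -/
theorem IMLN.fold_of_unfolding (X Λ : Type) (N : IMLN X Λ) (hN : N.IsILPN)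
    (us : List N.V) (hnd : us.Nodup) (hall : ∀ u : N.V, N.IsRet u ↔ u ∈ us)
    (T : IMLN X Λ) (hT : IMLN.IsUnfoldSeq N (us.map N.retLabel) T)
    (M : IMLN X Λ) (hM : IMLN.IsFoldSeq T ((us.map N.retLabel).reverse) M) :
    IMLN.Isom M N :=
  IMLN.fold_of_unfolding_general X Λ N hN us T hT M hM
end

section
/- Let N be an IMLN. Then, for any node u of N, the polynomial p(u) ∈ ℤ[x_1,…,x_n,λ_1,…,λ_r,y] is irreducible if and only if u is a tree node. -/
/-! Write `y` for the extra variable. Working up from the leaves, every node polynomial `f`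
becomes a nonconstant monomial when `y` is set to `0`, and its leading monomial for a
degree-lexicographic order is free of `y`. A leaf gives a variable, which is prime, and a node
with one child gives `λ · f`, a product of two non-units. At a tree node `p = y + f g`; if
`p = A B`, the constant term and the coefficient of `y` of `p` show that one factor, say `A`,
has a nonzero constant term. Setting `y = 0` makes `A` a divisor of a monomial, hence a unit
constant `c`, so every monomial of `A - c` involves `y`. The leading monomial of `A` is a summand
of that of `p`, hence free of `y`, so `A = c`. -/

namespace MvPolynomial

open MonomialOrder

variable {σ R : Type*}

section killVar

variable [CommRing R] [DecidableEq σ]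

noncomputable def killVar (y : σ) : MvPolynomial σ R →ₐ[R] MvPolynomial σ R :=
  aeval (Function.update X y 0)

lemma killVar_X_self (y : σ) : killVar y (X y : MvPolynomial σ R) = 0 := by
  simp [killVar]

lemma killVar_X_of_ne {x y : σ} (h : x ≠ y) : killVar y (X x : MvPolynomial σ R) = X x := by
  simp [killVar, Function.update_of_ne h]

lemma killVar_monomial (y : σ) (d : σ →₀ ℕ) (c : R) :
    killVar y (monomial d c) = if d y = 0 then monomial d c else 0 := by
  rw [killVar, aeval_monomial]
  split_ifs with hd
  · rw [monomial_eq, algebraMap_eq]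
    congr 1
    refine Finsupp.prod_congr fun i hi => ?_
    rw [Function.update_of_ne (ne_of_mem_of_not_mem hi (by simpa using hd))]
  · rw [Finsupp.prod, Finset.prod_eq_zero (i := y) (Finsupp.mem_support_iff.mpr hd)
      (by simp [zero_pow hd]), mul_zero]

lemma coeff_killVar (y : σ) (f : MvPolynomial σ R) {e : σ →₀ ℕ} (he : e y = 0) :
    coeff e (killVar y f) = coeff e f := by
  induction f using induction_on' with
  | monomial d c =>
    rw [killVar_monomial]
    split_ifs with hd
    · rfl
    · rw [coeff_zero, coeff_monomial, if_neg (by rintro rfl; exact hd he)]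
  | add p q hp hq => rw [map_add, coeff_add, coeff_add, hp, hq]

lemma constantCoeff_killVar (y : σ) (f : MvPolynomial σ R) :
    constantCoeff (killVar y f) = constantCoeff f :=
  coeff_killVar y f (Finsupp.zero_apply)

lemma eq_C_of_killVar_eq_C (m : MonomialOrder σ) {y : σ} {f : MvPolynomial σ R} {c : R}
    (hdeg : m.degree f y = 0) (hf : killVar y f = C c) : f = C c := by
  have hcoeff := coeff_killVar y f hdeg
  have hdeg0 : m.degree f = 0 := by
    by_contra hne
    rw [hf, coeff_C, if_neg (Ne.symm hne), eq_comm, m.coeff_degree_eq_zero_iff] at hcoeff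
    exact hne (by rw [hcoeff, m.degree_zero])
  rw [m.eq_C_of_degree_eq_zero hdeg0, leadingCoeff, hdeg0, ← coeff_killVar y f rfl, hf, coeff_C,
    if_pos rfl]

end killVar

section Admissible

variable [CommRing R] [DecidableEq σ] [LinearOrder σ] [WellFoundedGT σ]

structure Admissible (y : σ) (f : MvPolynomial σ R) : Prop where
  killVar_eq_monomial : ∃ d ≠ 0, killVar y f = monomial d 1
  degLex_degree_apply : degLex.degree f y = 0

variable {y : σ} {f g : MvPolynomial σ R}

lemma Admissible.constantCoeff_eq_zero (hf : Admissible y f) : constantCoeff f = 0 := by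
  obtain ⟨d, hd, hkill⟩ := hf.killVar_eq_monomial
  rw [← constantCoeff_killVar, hkill, constantCoeff_monomial, if_neg hd]

variable [IsDomain R]

lemma Admissible.ne_zero (hf : Admissible y f) : f ≠ 0 := by
  obtain ⟨d, -, hkill⟩ := hf.killVar_eq_monomial
  rintro rfl
  rw [map_zero, eq_comm, monomial_eq_zero] at hkill
  exact one_ne_zero hkill

lemma Admissible.not_isUnit (hf : Admissible y f) : ¬IsUnit f := fun h =>
  not_isUnit_zero (hf.constantCoeff_eq_zero ▸ h.map constantCoeff)

lemma Admissible.totalDegree_pos (hf : Admissible y f) : 0 < f.totalDegree := by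
  refine Nat.pos_of_ne_zero fun h => hf.ne_zero ?_
  rw [totalDegree_eq_zero_iff_eq_C.mp h, ← constantCoeff_eq, hf.constantCoeff_eq_zero, C_0]

lemma admissible_X {x : σ} (hx : x ≠ y) : Admissible y (X x : MvPolynomial σ R) where
  killVar_eq_monomial := ⟨Finsupp.single x 1, by simp, killVar_X_of_ne hx⟩
  degLex_degree_apply := by rw [degree_X, Finsupp.single_eq_of_ne hx.symm]

lemma Admissible.X_mul {x : σ} (hx : x ≠ y) (hf : Admissible y f) : Admissible y (X x * f) where
  killVar_eq_monomial := by
    obtain ⟨d, -, hkill⟩ := hf.killVar_eq_monomial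
    refine ⟨Finsupp.single x 1 + d, by simp, ?_⟩
    rw [map_mul, killVar_X_of_ne hx, hkill, X, monomial_mul, one_mul]
  degLex_degree_apply := by
    rw [degree_mul (X_ne_zero x) hf.ne_zero, degree_X, Finsupp.add_apply,
      Finsupp.single_eq_of_ne hx.symm, hf.degLex_degree_apply]

lemma Admissible.degLex_degree_X_add_mul (hf : Admissible y f) (hg : Admissible y g) :
    degLex.degree (X y + f * g) = degLex.degree f + degLex.degree g := by
  have hlt : degLex.degree (X y : MvPolynomial σ R) ≺[degLex] degLex.degree (f * g) := by
    rw [degLex_lt_iff, Finsupp.DegLex.lt_iff]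
    left
    simp only [ofDegLex_toDegLex, degree_X, Finsupp.degree_single, degree_mul hf.ne_zero hg.ne_zero,
      map_add, degree_degLexDegree]
    linarith [hf.totalDegree_pos, hg.totalDegree_pos]
  rw [add_comm, degree_add_of_lt hlt, degree_mul hf.ne_zero hg.ne_zero]

lemma Admissible.X_add_mul (hf : Admissible y f) (hg : Admissible y g) :
    Admissible y (X y + f * g) where
  killVar_eq_monomial := by
    obtain ⟨d, hd, hkf⟩ := hf.killVar_eq_monomial
    obtain ⟨e, -, hkg⟩ := hg.killVar_eq_monomial
    refine ⟨d + e, by simp [hd], ?_⟩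
    rw [map_add, map_mul, killVar_X_self, hkf, hkg, zero_add, monomial_mul, one_mul]
  degLex_degree_apply := by
    rw [hf.degLex_degree_X_add_mul hg, Finsupp.add_apply, hf.degLex_degree_apply,
      hg.degLex_degree_apply]

lemma Admissible.isUnit_of_X_add_mul_eq (hf : Admissible y f) (hg : Admissible y g)
    {A B : MvPolynomial σ R} (hAB : X y + f * g = A * B) (hA : constantCoeff A ≠ 0) :
    IsUnit A := by
  have hp := hf.X_add_mul hg
  obtain ⟨d, -, hkill⟩ := hp.killVar_eq_monomial
  have hdvd : killVar y A ∣ monomial d 1 := by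
    rw [← hkill, hAB, map_mul]
    exact dvd_mul_right _ _
  obtain ⟨n, u, -, hu, hkA⟩ := dvd_monomial_one_iff_exists.mp hdvd
  have hn : n = 0 := by
    by_contra hn
    rw [← constantCoeff_killVar y, hkA, constantCoeff_monomial, if_neg hn] at hA
    exact hA rfl
  obtain ⟨hA0, hB0⟩ := mul_ne_zero_iff.mp (hAB ▸ hp.ne_zero)
  have hdeg : degLex.degree A y = 0 := by
    have := hp.degLex_degree_apply
    rw [hAB, degree_mul hA0 hB0, Finsupp.add_apply] at this
    omega
  rw [eq_C_of_killVar_eq_C degLex hdeg (by rw [hkA, hn, monomial_zero'])]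
  exact hu.map C

theorem Admissible.irreducible_X_add_mul (hf : Admissible y f) (hg : Admissible y g) :
    Irreducible (X y + f * g) := by
  -- `constantCoeff ∘ pderiv y` reads off the coefficient of `y`
  have hcoeff_y : constantCoeff (pderiv y (X y + f * g)) = 1 := by
    simp [hf.constantCoeff_eq_zero, hg.constantCoeff_eq_zero]
  refine ⟨(hf.X_add_mul hg).not_isUnit, fun {A B} hAB => ?_⟩
  by_cases hA : constantCoeff A = 0
  · refine Or.inr (hf.isUnit_of_X_add_mul_eq hg (hAB.trans (mul_comm A B)) fun hB => ?_)
    simp [hAB, hA, hB] at hcoeff_y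
  · exact Or.inl (hf.isUnit_of_X_add_mul_eq hg hAB hA)

end Admissible

end MvPolynomial

namespace IMLN

variable {X Λ : Type} {N : IMLN X Λ}

lemma exists_arc_of_outDeg_eq_one {v : N.V} (h : N.outDeg v = 1) : ∃ w, N.Arc v w :=
  Set.nonempty_of_ncard_ne_zero (h.trans_ne one_ne_zero)

lemma exists_arcs_of_outDeg_eq_two {v : N.V} (h : N.outDeg v = 2) :
    ∃ a b, a ≠ b ∧ N.Arc v a ∧ N.Arc v b := by
  obtain ⟨a, b, hab, hchildren⟩ := Set.ncard_eq_two.mp h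
  have hmem : ∀ w, N.Arc v w ↔ w = a ∨ w = b := Set.ext_iff.mp hchildren
  exact ⟨a, b, hab, (hmem a).2 (Or.inl rfl), (hmem b).2 (Or.inr rfl)⟩

lemma IsIMLN.outDeg_cases (hN : N.IsIMLN) (v : N.V) :
    N.outDeg v = 0 ∨ N.outDeg v = 1 ∨ N.outDeg v = 2 := by
  by_cases hv : v = N.root
  · subst hv
    rcases hN.rootOut with h | h <;> simp [h]
  · rcases hN.degrees v hv with ⟨-, h⟩ | ⟨-, h⟩ <;> simp [h]

lemma IsIMLN.wellFounded_flip_arc (hN : N.IsIMLN) : WellFounded (flip N.Arc) := by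
  have := N.fintypeV
  let R := flip (Relation.TransGen N.Arc)
  have : IsTrans N.V R := ⟨fun _ _ _ h₁ h₂ => h₂.trans h₁⟩
  have : Std.Irrefl R := ⟨hN.acyclic⟩
  exact Subrelation.wf (r := R) (fun h => .single h) (Finite.wellFounded_of_trans_of_irrefl R)

open MvPolynomial in
lemma IsPolyAssignment.admissible [DecidableEq (X ⊕ (Λ ⊕ Unit))]
    [LinearOrder (X ⊕ (Λ ⊕ Unit))] [WellFoundedGT (X ⊕ (Λ ⊕ Unit))]
    {P : N.V → PolyRing X Λ} (hP : IsPolyAssignment N P) (hN : N.IsIMLN) (v : N.V) :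
    Admissible (Sum.inr (Sum.inr ())) (P v) := by
  refine hN.wellFounded_flip_arc.induction (C := fun v => Admissible _ (P v)) v fun v ih => ?_
  rcases hN.outDeg_cases v with h0 | h1 | h2
  · rw [hP.1 v h0]
    exact admissible_X (by simp)
  · obtain ⟨w, hw⟩ := exists_arc_of_outDeg_eq_one h1
    rw [hP.2.2 v w h1 hw]
    exact (ih w hw).X_mul (by simp)
  · obtain ⟨a, b, hab, ha, hb⟩ := exists_arcs_of_outDeg_eq_two h2
    rw [hP.2.1 v a b hab ha hb]
    exact (ih a ha).X_add_mul (ih b hb)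

end IMLN

/-- **Proposition (irr).** Let `N` be an IMLN.  Then, for any node `u` of `N`, the
polynomial `p(u) ∈ ℤ[x₁,…,xₙ,λ₁,…,λᵣ,y]` is irreducible if and only if `u` is a
tree node. -/
theorem IMLN.poly_irreducible_iff_treeNode (X Λ : Type) (N : IMLN X Λ)
    (hN : N.IsIMLN) (P : N.V → IMLN.PolyRing X Λ) (hP : IMLN.IsPolyAssignment N P)
    (u : N.V) :
    Irreducible (P u) ↔ N.IsTreeNode u := by
  classical
  obtain ⟨_, _⟩ := exists_wellFoundedGT (X ⊕ (Λ ⊕ Unit))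
  have hadm := hP.admissible hN
  refine ⟨fun hirr hu => ?_, fun hu => ?_⟩
  · obtain ⟨w, hw⟩ := exists_arc_of_outDeg_eq_one hu
    rw [hP.2.2 u w hu hw] at hirr
    exact (hirr.isUnit_or_isUnit rfl).elim MvPolynomial.X_prime.not_isUnit (hadm w).not_isUnit
  · rcases hN.outDeg_cases u with h0 | h1 | h2
    · rw [hP.1 u h0]
      exact MvPolynomial.X_prime.irreducible
    · exact absurd h1 hu
    · obtain ⟨a, b, hab, ha, hb⟩ := exists_arcs_of_outDeg_eq_two h2
      rw [hP.2.1 u a b hab ha hb]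
      exact (hadm a).irreducible_X_add_mul (hadm b)
end

section
/- Let N be an internally labelled phylogenetic network, and let v_1, v_2 be two reticulation nodes of N. If p(v_1) = p(v_2), then v_1 = v_2. -/
/-!
Evaluate at the point `x_i = 1`, `y = 0`, `λ_l = 0` and `λ_m = 1` for `m ≠ l`. Then `y + p(a)p(b)`
vanishes only if a child does, and `ℓ(u)·p(w)` only if `ℓ(u) = l` or `p(w)` does; since no other
node of out-degree one carries the label `l` of a reticulation node `v`, every node whose polynomial
vanishes there is an ancestor of `v`, while `p(v)` itself vanishes. So `p(v₁) = p(v₂)` makes each of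
`v₁`, `v₂` an ancestor of the other, and acyclicity gives `v₁ = v₂`.
-/

namespace IMLN

variable {X Λ : Type} {N : IMLN X Λ}

lemma exists_arc_of_outDeg_ne_zero {v : N.V} (h : N.outDeg v ≠ 0) : ∃ w, N.Arc v w :=
  Set.nonempty_of_ncard_ne_zero h

namespace IsIMLN

lemma outDeg_le_two (hN : N.IsIMLN) (v : N.V) : N.outDeg v ≤ 2 := by
  by_cases hv : v = N.root
  · subst hv
    rcases hN.rootOut with h | h <;> omega
  · rcases hN.degrees v hv with ⟨_, h | h | h⟩ | ⟨_, h⟩ <;> omega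

lemma isRet_or_isElem_of_outDeg_eq_one (hN : N.IsIMLN) {v : N.V} (h : N.outDeg v = 1) :
    N.IsRet v ∨ N.IsElem v := by
  by_cases hv : v = N.root
  · subst hv
    exact Or.inr ⟨hN.rootIn.trans_le zero_le_one, h⟩
  · rcases hN.degrees v hv with ⟨hin, _⟩ | hret
    · exact Or.inr ⟨hin.le, h⟩
    · exact Or.inl hret

lemma eq_of_retLabel_eq (hN : N.IsIMLN) {u v : N.V} (hu : N.outDeg u = 1) (hv : N.IsRet v)
    (hl : N.retLabel u = N.retLabel v) : u = v := by
  rcases hN.isRet_or_isElem_of_outDeg_eq_one hu with hret | helem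
  · exact hN.retInj u v hret hv hl
  · exact absurd hl.symm (hN.retElemLabels v u hv helem)

lemma wellFounded_flip_arc_s10 (hN : N.IsIMLN) : WellFounded (flip N.Arc) := by
  have := N.fintypeV
  have : Std.Irrefl (Relation.TransGen (flip N.Arc)) :=
    ⟨fun v h => hN.acyclic v (Relation.transGen_swap.mp h)⟩
  exact Subrelation.wf Relation.TransGen.single (Finite.wellFounded_of_trans_of_irrefl _)

lemma eq_of_reaches_of_reaches (hN : N.IsIMLN) {u v : N.V} (huv : N.Reaches u v)
    (hvu : N.Reaches v u) : u = v := by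
  rcases Relation.reflTransGen_iff_eq_or_transGen.mp huv with h | h
  · exact h.symm
  · exact absurd (h.trans_left hvu) (hN.acyclic u)

end IsIMLN

variable [DecidableEq Λ]

def zeroAtLabel (l : Λ) : X ⊕ (Λ ⊕ Unit) → ℤ :=
  Sum.elim (fun _ => 1) (Sum.elim (fun m => if m = l then 0 else 1) fun _ => 0)

variable {P : N.V → PolyRing X Λ}

lemma eval_zeroAtLabel_eq_zero (hP : N.IsPolyAssignment P) {v : N.V} (hv : N.outDeg v = 1) :
    MvPolynomial.eval (zeroAtLabel (N.retLabel v)) (P v) = 0 := by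
  obtain ⟨w, hw⟩ := exists_arc_of_outDeg_ne_zero (hv.trans_ne one_ne_zero)
  simp [hP.2.2 v w hv hw, lVar, zeroAtLabel]

lemma IsIMLN.reaches_of_eval_zeroAtLabel_eq_zero (hN : N.IsIMLN) (hP : N.IsPolyAssignment P)
    {v : N.V} (hv : N.IsRet v) (u : N.V)
    (hu : MvPolynomial.eval (zeroAtLabel (N.retLabel v)) (P u) = 0) : N.Reaches u v := by
  induction u using hN.wellFounded_flip_arc_s10.induction with
  | _ u ih =>
  have reaches_of_child {w : N.V} (hw : N.Arc u w)
      (h : MvPolynomial.eval (zeroAtLabel (N.retLabel v)) (P w) = 0) : N.Reaches u v :=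
    Relation.ReflTransGen.head hw (ih w hw h)
  obtain hd | hd | hd : N.outDeg u = 0 ∨ N.outDeg u = 1 ∨ N.outDeg u = 2 := by
    have := hN.outDeg_le_two u; omega
  · simp [hP.1 u hd, xVar, zeroAtLabel] at hu
  · obtain ⟨w, hw⟩ := exists_arc_of_outDeg_ne_zero (hd.trans_ne one_ne_zero)
    rw [hP.2.2 u w hd hw, map_mul] at hu
    rcases mul_eq_zero.mp hu with hl | hw0
    · have hl : N.retLabel u = N.retLabel v := by
        by_contra hne
        simp [lVar, zeroAtLabel, hne] at hl
      exact (hN.eq_of_retLabel_eq hd hv hl) ▸ Relation.ReflTransGen.refl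
    · exact reaches_of_child hw hw0
  · obtain ⟨a, b, hab, ha, hb⟩ := exists_arcs_of_outDeg_eq_two hd
    rw [hP.2.1 u a b hab ha hb] at hu
    simp only [map_add, map_mul, yVar, MvPolynomial.eval_X, zeroAtLabel, Sum.elim_inr,
      zero_add] at hu
    rcases mul_eq_zero.mp hu with h | h
    · exact reaches_of_child ha h
    · exact reaches_of_child hb h

lemma IsIMLN.reaches_of_poly_eq (hN : N.IsIMLN) (hP : N.IsPolyAssignment P) {u v : N.V}
    (hv : N.IsRet v) (heq : P u = P v) : N.Reaches u v :=
  hN.reaches_of_eval_zeroAtLabel_eq_zero hP hv u <| by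
    rw [heq]
    exact eval_zeroAtLabel_eq_zero hP hv.2

end IMLN

/-- **Lemma (ret-unique).** Let `N` be an internally labelled phylogenetic network
and `v₁, v₂` two reticulation nodes.  If `p(v₁) = p(v₂)`, then `v₁ = v₂`. -/
theorem IMLN.ret_poly_injective (X Λ : Type) (N : IMLN X Λ) (hN : N.IsILPN)
    (P : N.V → IMLN.PolyRing X Λ) (hP : IMLN.IsPolyAssignment N P)
    (v₁ v₂ : N.V) (h₁ : N.IsRet v₁) (h₂ : N.IsRet v₂)
    (heq : P v₁ = P v₂) :
    v₁ = v₂ := by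
  classical
  exact hN.1.eq_of_reaches_of_reaches (hN.1.reaches_of_poly_eq hP h₂ heq)
    (hN.1.reaches_of_poly_eq hP h₁ heq.symm)
end
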